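/- arXiv:1612.01929 — 5 statements merged into one kernel-verified Lean document; each statement's English description precedes it below -/
import Mathlib

section
/- Let q be a prime power, n a positive integer, and let S and T be subsets of F_q^n. Then there exist a subset S' of S and a subset T' of T such that |S'| + |T'| ≤ M(F_q^n) and (S' + T) ∪ (S + T') = S + T, where S + T denotes the sumset {s + t : s ∈ S, t ∈ T}. -/
open Pointwise

/-- `mCount q n d` is the number of monomials in `x₁, …, xₙ` with degree at most `q - 1`
in each variable and total degree at most `d`. -/
noncomputable def mCount (q n : ℕ) (d : ℝ) : ℕ :=
  Nat.card {a : Fin n → ℕ // (∀ i, a i ≤ q - 1) ∧ ((∑ i, a i : ℕ) : ℝ) ≤ d}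

/-- `Mbound q n = 3 ⬝ m_{(q-1)n/3}`, the Ellenberg–Gijswijt bound for `𝔽_q^n`. -/
noncomputable def Mbound (q n : ℕ) : ℕ := 3 * mCount q n (((q : ℝ) - 1) * n / 3)

/-!
The indicator of `x + y = w` on `(𝔽_q^n)³` is `∏ᵢ (1 - (xᵢ + yᵢ - wᵢ)^(q-1))`, of total degree
at most `(q-1)n`. Each of its monomials thus has degree at most `(q-1)n/3` in one of `x`, `y`,
`w`, and the indicator splits as `∑_a x^a P_a(y,w) + ∑_b y^b Q_b(x,w) + ∑_c w^c R_c(x,y)` with at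
most `m_{(q-1)n/3}` exponents in each of the three slices.

Choose `S₁ ⊆ S` whose vectors `(x^a)_a` span those of all of `S`, and `T₁ ⊆ T` likewise for
`(y^b)_b`. If `z = x₀ + y₀` lies in `S + T` but not in `(S₁ + T) ∪ (S + T₁)`, the linear
dependencies `x₀^a = ∑ₓ λₓ x^a` over `S₁` and `y₀^b = ∑_y μ_y y^b` over `T₁` turn the indicator,
summed against `(δ_{x₀} - λ) ⊗ (δ_{y₀} - μ)`, into a combination of the `w^c` alone; on the
uncovered part of `S + T` it is the indicator of `z`. So the vectors `(z^c)_c` of the uncovered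
`z` are linearly independent and there are at most `m_{(q-1)n/3}` of them. Adding one summand
`x₀` for each of them to `S₁` gives `S'`, and `T' = T₁`.
-/

def evalMonomial {ι R : Type*} [Fintype ι] [CommMonoid R] (a : ι → ℕ) (x : ι → R) : R :=
  ∏ i, x i ^ a i

theorem exists_sum_eq_one_sub_add_sub_pow (R : Type*) [CommRing R] [Nontrivial R] (m : ℕ) :
    ∃ (D : Finset (Fin 3 →₀ ℕ)) (c : (Fin 3 →₀ ℕ) → R), (∀ e ∈ D, e 0 + e 1 + e 2 ≤ m) ∧
      ∀ u v s : R, 1 - (u + v - s) ^ m = ∑ e ∈ D, c e * (u ^ e 0 * v ^ e 1 * s ^ e 2) := by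
  open MvPolynomial in
  set g : MvPolynomial (Fin 3) R := 1 - (X 0 + X 1 - X 2) ^ m
  have hg : g.totalDegree ≤ m := by
    have hlin : (X 0 + X 1 - X 2 : MvPolynomial (Fin 3) R).totalDegree ≤ 1 :=
      (totalDegree_sub _ _).trans <| max_le
        ((totalDegree_add _ _).trans (max_le (totalDegree_X _).le (totalDegree_X _).le))
        (totalDegree_X _).le
    refine (totalDegree_sub _ _).trans (max_le (by simp) ((totalDegree_pow _ _).trans ?_))
    simpa using Nat.mul_le_mul_left m hlin
  refine ⟨g.support, g.coeff, fun e he => ?_, fun u v s => ?_⟩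
  · have := (le_totalDegree he).trans hg
    rwa [Finsupp.sum_fintype _ _ fun _ => rfl, Fin.sum_univ_three] at this
  · rw [show (1 - (u + v - s) ^ m : R) = eval ![u, v, s] g by simp [g], eval_eq']
    simp [Fin.prod_univ_three]

theorem Finset.sum_mul_eq_sum_mul_sum_fiber {ι E K : Type*} [CommSemiring K] [DecidableEq E]
    {s : Finset ι} {A : Finset E} {e : ι → E} (h : ∀ m ∈ s, e m ∈ A) (f : E → K) (g : ι → K) :
    ∑ m ∈ s, f (e m) * g m = ∑ a ∈ A, f a * ∑ m ∈ s with e m = a, g m := by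
  rw [← Finset.sum_fiberwise_of_maps_to h]
  refine Finset.sum_congr rfl fun a _ => ?_
  rw [Finset.mul_sum]
  exact Finset.sum_congr rfl fun m hm => by rw [(Finset.mem_filter.mp hm).2]

theorem exists_sum_eq_sum_slices {ι E G K : Type*} [CommSemiring K] [DecidableEq E]
    (M : Finset ι) (c : ι → K) (ea eb ec : ι → E) (u : E → G → K) {A B C : Finset E}
    (hM : ∀ m ∈ M, ea m ∈ A ∨ eb m ∈ B ∨ ec m ∈ C) :
    ∃ P Q R : E → G → G → K, ∀ x y w,
      ∑ m ∈ M, c m * (u (ea m) x * u (eb m) y * u (ec m) w) =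
        ∑ a ∈ A, u a x * P a y w + ∑ b ∈ B, u b y * Q b x w + ∑ γ ∈ C, u γ w * R γ x y := by
  classical
  set M₁ := M.filter (ea · ∈ A)
  set M₂ := (M.filter (ea · ∉ A)).filter (eb · ∈ B)
  set M₃ := (M.filter (ea · ∉ A)).filter (eb · ∉ B)
  have h₁ : ∀ m ∈ M₁, ea m ∈ A := fun m hm => (Finset.mem_filter.mp hm).2
  have h₂ : ∀ m ∈ M₂, eb m ∈ B := fun m hm => (Finset.mem_filter.mp hm).2
  have h₃ : ∀ m ∈ M₃, ec m ∈ C := fun m hm => by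
    simp only [M₃, Finset.mem_filter] at hm
    exact (hM m hm.1.1).resolve_left hm.1.2 |>.resolve_left hm.2
  refine ⟨fun a y w => ∑ m ∈ M₁ with ea m = a, c m * (u (eb m) y * u (ec m) w),
    fun b x w => ∑ m ∈ M₂ with eb m = b, c m * (u (ea m) x * u (ec m) w),
    fun γ x y => ∑ m ∈ M₃ with ec m = γ, c m * (u (ea m) x * u (eb m) y), fun x y w => ?_⟩
  rw [← Finset.sum_mul_eq_sum_mul_sum_fiber h₁, ← Finset.sum_mul_eq_sum_mul_sum_fiber h₂,
    ← Finset.sum_mul_eq_sum_mul_sum_fiber h₃, ← Finset.sum_filter_add_sum_filter_not M (ea · ∈ A),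
    ← Finset.sum_filter_add_sum_filter_not (M.filter (ea · ∉ A)) (eb · ∈ B), add_assoc]
  congr 1
  · exact Finset.sum_congr rfl fun m _ => by ring
  congr 1 <;> exact Finset.sum_congr rfl fun m _ => by ring

theorem card_le_mCount {q n : ℕ} {d : ℝ} {A : Finset (Fin n → ℕ)}
    (hA : ∀ a ∈ A, (∀ i, a i ≤ q - 1) ∧ ((∑ i, a i : ℕ) : ℝ) ≤ d) : A.card ≤ mCount q n d := by
  set P := {a : Fin n → ℕ | (∀ i, a i ≤ q - 1) ∧ ((∑ i, a i : ℕ) : ℝ) ≤ d}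
  have hP : P.Finite :=
    (Set.Finite.pi (t := fun _ => Set.Iic (q - 1)) fun _ => Set.finite_Iic _).subset
      fun a ha => Set.mem_univ_pi.mpr ha.1
  rw [mCount, ← Set.ncard_coe_finset]
  exact Set.ncard_le_ncard (fun a ha => hA a ha) hP

theorem exists_sum_apply_le {ι : Type*} [Fintype ι] {m : ℕ} {t : ι → Fin 3 →₀ ℕ}
    (ht : ∀ i, t i 0 + t i 1 + t i 2 ≤ m) :
    ∃ k, ((∑ i, t i k : ℕ) : ℝ) ≤ m * Fintype.card ι / 3 := by
  have htotal : ∑ i, t i 0 + ∑ i, t i 1 + ∑ i, t i 2 ≤ Fintype.card ι * m := by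
    rw [← Finset.sum_add_distrib, ← Finset.sum_add_distrib]
    exact (Finset.sum_le_sum fun i _ => ht i).trans (by simp)
  have htotal' := (Nat.cast_le (α := ℝ)).mpr htotal
  by_contra! h
  have h₀ := h 0
  have h₁ := h 1
  have h₂ := h 2
  push_cast at htotal' h₀ h₁ h₂
  linarith

section FiniteField

variable {F : Type*} [Field F] [Fintype F] [DecidableEq F]

theorem one_sub_pow_card_sub_one (u : F) :
    1 - u ^ (Fintype.card F - 1) = if u = 0 then 1 else 0 := by
  split_ifs with hu
  · simp [hu, Nat.sub_ne_zero_of_lt Fintype.one_lt_card]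
  · simp [FiniteField.pow_card_sub_one_eq_one u hu]

theorem ite_add_eq_eq_prod {ι : Type*} [Fintype ι] (x y w : ι → F) :
    (if x + y = w then 1 else 0 : F) = ∏ i, (1 - (x i + y i - w i) ^ (Fintype.card F - 1)) := by
  simp [one_sub_pow_card_sub_one, sub_eq_zero, Finset.prod_boole, funext_iff]

theorem exists_sum_eq_ite_add_eq {ι : Type*} [Fintype ι] [DecidableEq ι] :
    ∃ (M : Finset (ι → Fin 3 →₀ ℕ)) (c : (ι → Fin 3 →₀ ℕ) → F),
      (∀ t ∈ M, ∀ i, t i 0 + t i 1 + t i 2 ≤ Fintype.card F - 1) ∧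
      ∀ x y w : ι → F, (if x + y = w then 1 else 0 : F) = ∑ t ∈ M, c t *
        (evalMonomial (t · 0) x * evalMonomial (t · 1) y * evalMonomial (t · 2) w) := by
  obtain ⟨D, c, hD, hsum⟩ := exists_sum_eq_one_sub_add_sub_pow F (Fintype.card F - 1)
  refine ⟨Fintype.piFinset fun _ => D, fun t => ∏ i, c (t i),
    fun t ht i => hD _ (Fintype.mem_piFinset.mp ht i), fun x y w => ?_⟩
  simp only [ite_add_eq_eq_prod, hsum, Finset.prod_univ_sum, evalMonomial,
    ← Finset.prod_mul_distrib]

theorem exists_ite_add_eq_eq_sum_slices (n : ℕ) :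
    ∃ A B C : Finset (Fin n → ℕ),
      A.card ≤ mCount (Fintype.card F) n (((Fintype.card F : ℝ) - 1) * n / 3) ∧
      B.card ≤ mCount (Fintype.card F) n (((Fintype.card F : ℝ) - 1) * n / 3) ∧
      C.card ≤ mCount (Fintype.card F) n (((Fintype.card F : ℝ) - 1) * n / 3) ∧
      ∃ P Q R : (Fin n → ℕ) → (Fin n → F) → (Fin n → F) → F, ∀ x y w : Fin n → F,
        (if x + y = w then 1 else 0 : F) = ∑ a : A, evalMonomial a x * P a y w +
          ∑ b : B, evalMonomial b y * Q b x w + ∑ γ : C, evalMonomial γ w * R γ x y := by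
  obtain ⟨M, c, hM, hsum⟩ := exists_sum_eq_ite_add_eq (F := F) (ι := Fin n)
  set q := Fintype.card F
  set d : ℝ := ((q : ℝ) - 1) * n / 3
  let slice (k : Fin 3) := {t ∈ M | ((∑ i, t i k : ℕ) : ℝ) ≤ d}.image (fun t i => t i k)
  have hslice_card (k : Fin 3) : (slice k).card ≤ mCount q n d := by
    refine card_le_mCount fun a ha => ?_
    obtain ⟨t, ht, rfl⟩ := Finset.mem_image.mp ha
    obtain ⟨htM, htd⟩ := Finset.mem_filter.mp ht
    refine ⟨fun i => ?_, htd⟩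
    have := hM t htM i
    fin_cases k <;> simp <;> omega
  have hslices : ∀ t ∈ M, (fun i => t i 0) ∈ slice 0 ∨ (fun i => t i 1) ∈ slice 1 ∨
      (fun i => t i 2) ∈ slice 2 := by
    intro t ht
    obtain ⟨k, hk⟩ := exists_sum_apply_le (hM t ht)
    rw [Nat.cast_pred Fintype.card_pos, Fintype.card_fin] at hk
    have hmem : (fun i => t i k) ∈ slice k :=
      Finset.mem_image_of_mem _ (Finset.mem_filter.mpr ⟨ht, hk⟩)
    fin_cases k
    exacts [Or.inl hmem, Or.inr (Or.inl hmem), Or.inr (Or.inr hmem)]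
  obtain ⟨P, Q, R, hPQR⟩ := exists_sum_eq_sum_slices M c (fun t i => t i 0) (fun t i => t i 1)
    (fun t i => t i 2) evalMonomial hslices
  refine ⟨slice 0, slice 1, slice 2, hslice_card 0, hslice_card 1, hslice_card 2, P, Q, R,
    fun x y w => ?_⟩
  rw [hsum, hPQR, ← Finset.sum_coe_sort (slice 0), ← Finset.sum_coe_sort (slice 1),
    ← Finset.sum_coe_sort (slice 2)]

end FiniteField

section Covering

variable {G K : Type*} [Field K]

theorem LinearIndepOn.ncard_le_card {ι : Type*} [Fintype ι] {f : G → ι → K}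
    {s : Set G} (h : LinearIndepOn K f s) : s.ncard ≤ Fintype.card ι := by
  have : Fintype s := @Fintype.ofFinite s h.finite
  have := h.fintype_card_le_finrank
  rw [Module.finrank_fintype_fun_eq_card] at this
  rwa [← Nat.card_coe_set_eq, Nat.card_eq_fintype_card]

theorem exists_finset_subset_card_le_forall_mem_span {ι : Type*} [Fintype ι]
    (f : G → ι → K) (S : Set G) :
    ∃ S₁ : Finset G, ↑S₁ ⊆ S ∧ S₁.card ≤ Fintype.card ι ∧
      ∀ x ∈ S, f x ∈ Submodule.span K (f '' S₁) := by
  obtain ⟨b, hbS, -, hspan, hli⟩ :=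
    exists_linearIndepOn_extension (linearIndepOn_empty K f) (Set.empty_subset S)
  have hb : b.Finite := @Set.toFinite _ b hli.finite
  refine ⟨hb.toFinset, by simpa using hbS, ?_, fun x hx => by simpa using hspan ⟨x, hx, rfl⟩⟩
  simpa [← Set.ncard_eq_toFinset_card b hb] using hli.ncard_le_card

theorem exists_linearCombination_eq_zero_of_mem_span {V : Type*} [AddCommGroup V]
    [Module K V] {f : G → V} {S₁ : Set G} {x₀ : G} (hx : f x₀ ∈ Submodule.span K (f '' S₁))
    (hx₀ : x₀ ∉ S₁) :
    ∃ α : G →₀ K, Finsupp.linearCombination K f α = 0 ∧ α x₀ = 1 ∧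
      ∀ x ≠ x₀, α x ≠ 0 → x ∈ S₁ := by
  classical
  obtain ⟨l, hlS, hl⟩ := Finsupp.mem_span_image_iff_linearCombination K |>.mp hx
  have hl_supp : ∀ x, l x ≠ 0 → x ∈ S₁ := fun x hx => hlS (Finsupp.mem_support_iff.mpr hx)
  refine ⟨Finsupp.single x₀ 1 - l, by simp [hl], ?_, fun x hne hx => hl_supp x ?_⟩
  · simp [not_imp_comm.mp (hl_supp x₀) hx₀]
  · simpa [Finsupp.single_apply, Ne.symm hne] using hx

theorem sum_sum_mul_eq_zero_of_linearCombination_eq_zero {ι : Type*} [Fintype ι]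
    {f : G → ι → K} {α : G →₀ K} (hα : Finsupp.linearCombination K f α = 0)
    (s : Finset G) (g : G → K) (h : ι → G → K) :
    ∑ x ∈ α.support, ∑ y ∈ s, α x * g y * ∑ a, f x a * h a y = 0 := by
  have hcoord : ∀ a, ∑ x ∈ α.support, α x * f x a = 0 := fun a => by
    simpa [Finsupp.linearCombination_apply, Finsupp.sum, Finset.sum_apply] using
      congrFun hα a
  calc ∑ x ∈ α.support, ∑ y ∈ s, α x * g y * ∑ a, f x a * h a y
      = ∑ a, (∑ x ∈ α.support, α x * f x a) * ∑ y ∈ s, g y * h a y := by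
        simp only [Finset.mul_sum, Finset.sum_mul]
        rw [Finset.sum_comm]
        conv_rhs => rw [Finset.sum_comm]
        refine Finset.sum_congr rfl fun y _ => ?_
        conv_rhs => rw [Finset.sum_comm]
        exact Finset.sum_congr rfl fun x _ => Finset.sum_congr rfl fun a _ => by ring
    _ = 0 := by simp [hcoord]

variable [Add G] [DecidableEq G] {ιA ιB ιC : Type*} [Fintype ιA] [Fintype ιB] [Fintype ιC]

theorem sum_sum_mul_ite_add_eq_eq_sum_mul
    {fA : G → ιA → K} {fB : G → ιB → K} (fC : G → ιC → K)
    {P : ιA → G → G → K} {Q : ιB → G → G → K} (R : ιC → G → G → K)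
    (hδ : ∀ x y w, (if x + y = w then 1 else 0 : K) =
      ∑ a, fA x a * P a y w + ∑ b, fB y b * Q b x w + ∑ c, fC w c * R c x y)
    {α β : G →₀ K} (hα : Finsupp.linearCombination K fA α = 0)
    (hβ : Finsupp.linearCombination K fB β = 0) (w : G) :
    ∑ x ∈ α.support, ∑ y ∈ β.support, α x * β y * (if x + y = w then 1 else 0) =
      ∑ c, fC w c * ∑ x ∈ α.support, ∑ y ∈ β.support, α x * β y * R c x y := by
  have hA := sum_sum_mul_eq_zero_of_linearCombination_eq_zero hα β.support β (fun a y => P a y w)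
  have hB := sum_sum_mul_eq_zero_of_linearCombination_eq_zero hβ α.support α (fun b x => Q b x w)
  have hB' : ∑ x ∈ α.support, ∑ y ∈ β.support, α x * β y * ∑ b, fB y b * Q b x w = 0 := by
    rw [← hB, Finset.sum_comm]
    exact Finset.sum_congr rfl fun x _ => Finset.sum_congr rfl fun y _ => by ring
  simp only [hδ, mul_add, Finset.sum_add_distrib]
  rw [hA, hB', zero_add, zero_add]
  simp only [Finset.mul_sum]
  conv_rhs => rw [Finset.sum_comm]
  refine Finset.sum_congr rfl fun x _ => ?_
  conv_rhs => rw [Finset.sum_comm]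
  exact Finset.sum_congr rfl fun y _ => Finset.sum_congr rfl fun c _ => by ring

theorem sum_sum_mul_ite_add_eq_eq_ite {S S₁ T T₁ : Set G} (hS₁ : S₁ ⊆ S) (hT₁ : T₁ ⊆ T)
    {α β : G →₀ K} {x₀ y₀ w : G} (hx₀ : x₀ ∈ S) (hy₀ : y₀ ∈ T)
    (hα₀ : α x₀ = 1) (hα : ∀ x ≠ x₀, α x ≠ 0 → x ∈ S₁)
    (hβ₀ : β y₀ = 1) (hβ : ∀ y ≠ y₀, β y ≠ 0 → y ∈ T₁)
    (hwS : w ∉ S₁ + T) (hwT : w ∉ S + T₁) :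
    ∑ x ∈ α.support, ∑ y ∈ β.support, α x * β y * (if x + y = w then 1 else 0) =
      if x₀ + y₀ = w then 1 else 0 := by
  have hαS : ∀ x ∈ α.support, x ∈ S := fun x hx =>
    if h : x = x₀ then h ▸ hx₀ else hS₁ (hα x h (Finsupp.mem_support_iff.mp hx))
  have hβT : ∀ y ∈ β.support, y ∈ T := fun y hy =>
    if h : y = y₀ then h ▸ hy₀ else hT₁ (hβ y h (Finsupp.mem_support_iff.mp hy))
  have hne : ∀ x ∈ α.support, ∀ y ∈ β.support, x ≠ x₀ ∨ y ≠ y₀ → x + y ≠ w := by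
    rintro x hx y hy (hx' | hy') rfl
    · exact hwS (Set.add_mem_add (hα x hx' (Finsupp.mem_support_iff.mp hx)) (hβT y hy))
    · exact hwT (Set.add_mem_add (hαS x hx) (hβ y hy' (Finsupp.mem_support_iff.mp hy)))
  have hx₀α : x₀ ∈ α.support := by simp [hα₀]
  have hy₀β : y₀ ∈ β.support := by simp [hβ₀]
  rw [Finset.sum_eq_single_of_mem x₀ hx₀α, Finset.sum_eq_single_of_mem y₀ hy₀β]
  · simp [hα₀, hβ₀]
  · intro y hy hy'
    simp [hne x₀ hx₀α y hy (Or.inr hy')]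
  · intro x hx hx'
    exact Finset.sum_eq_zero fun y hy => by simp [hne x hx y hy (Or.inl hx')]

theorem linearIndepOn_add_diff_add_union_add
    {fA : G → ιA → K} {fB : G → ιB → K} {fC : G → ιC → K}
    {P : ιA → G → G → K} {Q : ιB → G → G → K} {R : ιC → G → G → K}
    (hδ : ∀ x y w, (if x + y = w then 1 else 0 : K) =
      ∑ a, fA x a * P a y w + ∑ b, fB y b * Q b x w + ∑ c, fC w c * R c x y)
    {S S₁ T T₁ : Set G} (hS₁ : S₁ ⊆ S) (hT₁ : T₁ ⊆ T)
    (hS : ∀ x ∈ S, fA x ∈ Submodule.span K (fA '' S₁))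
    (hT : ∀ y ∈ T, fB y ∈ Submodule.span K (fB '' T₁)) :
    LinearIndepOn K fC ((S + T) \ ((S₁ + T) ∪ (S + T₁))) := by
  set Z := (S + T) \ ((S₁ + T) ∪ (S + T₁))
  have hdual : ∀ z ∈ Z, ∃ ρ : ιC → K, ∀ w ∈ Z, ∑ c, fC w c * ρ c = if z = w then 1 else 0 := by
    rintro z ⟨hz, hz_cov⟩
    obtain ⟨x₀, hx₀, y₀, hy₀, rfl⟩ := Set.mem_add.mp hz
    obtain ⟨α, hα, hα₀, hαS₁⟩ := exists_linearCombination_eq_zero_of_mem_span (hS x₀ hx₀)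
      fun h => hz_cov (Or.inl (Set.add_mem_add h hy₀))
    obtain ⟨β, hβ, hβ₀, hβT₁⟩ := exists_linearCombination_eq_zero_of_mem_span (hT y₀ hy₀)
      fun h => hz_cov (Or.inr (Set.add_mem_add hx₀ h))
    refine ⟨fun c => ∑ x ∈ α.support, ∑ y ∈ β.support, α x * β y * R c x y, fun w hw => ?_⟩
    rw [← sum_sum_mul_ite_add_eq_eq_sum_mul fC R hδ hα hβ w]
    exact sum_sum_mul_ite_add_eq_eq_ite hS₁ hT₁ hx₀ hy₀ hα₀ hαS₁ hβ₀ hβT₁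
      (fun h => hw.2 (Or.inl h)) (fun h => hw.2 (Or.inr h))
  choose! ρ hρ using hdual
  refine LinearIndependent.of_pairwise_dual_eq_zero_one _
    (fun z : Z => Fintype.linearCombination K (ρ z)) (fun z w hzw => ?_) (fun z => ?_)
  · simp [Fintype.linearCombination_apply, hρ z z.2 w w.2, Subtype.coe_ne_coe.mpr hzw]
  · simp [Fintype.linearCombination_apply, hρ z z.2 z z.2]

theorem exists_finset_add_union_add_eq
    {fA : G → ιA → K} {fB : G → ιB → K} {fC : G → ιC → K}
    {P : ιA → G → G → K} {Q : ιB → G → G → K} {R : ιC → G → G → K}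
    (hδ : ∀ x y w, (if x + y = w then 1 else 0 : K) =
      ∑ a, fA x a * P a y w + ∑ b, fB y b * Q b x w + ∑ c, fC w c * R c x y)
    (S T : Set G) :
    ∃ S' T' : Finset G, ↑S' ⊆ S ∧ ↑T' ⊆ T ∧
      S'.card + T'.card ≤ Fintype.card ιA + Fintype.card ιB + Fintype.card ιC ∧
      (↑S' + T) ∪ (S + ↑T') = S + T := by
  obtain ⟨S₁, hS₁, hS₁_card, hS⟩ := exists_finset_subset_card_le_forall_mem_span fA S
  obtain ⟨T₁, hT₁, hT₁_card, hT⟩ := exists_finset_subset_card_le_forall_mem_span fB T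
  set Z := (S + T) \ ((↑S₁ + T) ∪ (S + ↑T₁))
  have hZ_indep := linearIndepOn_add_diff_add_union_add hδ hS₁ hT₁ hS hT
  have hZ_fin : Z.Finite := @Set.toFinite _ Z hZ_indep.finite
  have hZ_card : hZ_fin.toFinset.card ≤ Fintype.card ιC := by
    simpa [← Set.ncard_eq_toFinset_card Z hZ_fin] using hZ_indep.ncard_le_card
  choose! x hx y hy hxy using fun z (hz : z ∈ Z) => Set.mem_add.mp hz.1
  set S' := S₁ ∪ hZ_fin.toFinset.image x
  have hS' : ↑S' ⊆ S := by
    intro u hu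
    simp only [S', Finset.coe_union, Finset.coe_image, Set.Finite.coe_toFinset] at hu
    rcases hu with hu | ⟨z, hz, rfl⟩
    · exact hS₁ hu
    · exact hx z hz
  refine ⟨S', T₁, hS', hT₁, ?_, ?_⟩
  · have : S'.card ≤ S₁.card + hZ_fin.toFinset.card :=
      (Finset.card_union_le _ _).trans (Nat.add_le_add_left Finset.card_image_le _)
    omega
  refine subset_antisymm (Set.union_subset (Set.add_subset_add_right hS')
    (Set.add_subset_add_left hT₁)) fun z hz => ?_
  by_cases hcov : z ∈ (↑S₁ + T) ∪ (S + ↑T₁)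
  · have hS₁S' : (↑S₁ : Set G) ⊆ ↑S' := Finset.coe_subset.mpr Finset.subset_union_left
    exact Set.union_subset_union_left _ (Set.add_subset_add_right hS₁S') hcov
  · have hzZ : z ∈ Z := ⟨hz, hcov⟩
    have hxS' : x z ∈ S' :=
      Finset.mem_union_right _ (Finset.mem_image_of_mem x (by simpa using hzZ))
    exact Or.inl (hxy z hzZ ▸ Set.add_mem_add hxS' (hy z hzZ))

end Covering

theorem sumset_union_of_sumsets_of_subsets_general (q n : ℕ)
    (F : Type*) [Field F] [Fintype F] (hF : Fintype.card F = q)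
    (S T : Set (Fin n → F)) :
    ∃ S' T' : Set (Fin n → F), S' ⊆ S ∧ T' ⊆ T ∧
      Nat.card S' + Nat.card T' ≤ Mbound q n ∧
      (S' + T) ∪ (S + T') = S + T := by
  classical
  subst hF
  obtain ⟨A, B, C, hA, hB, hC, P, Q, R, hδ⟩ := exists_ite_add_eq_eq_sum_slices (F := F) n
  obtain ⟨S', T', hS', hT', hcard, hcover⟩ := exists_finset_add_union_add_eq hδ S T
  refine ⟨S', T', hS', hT', ?_, hcover⟩
  simp only [Nat.card_coe_set_eq, Set.ncard_coe_finset, Fintype.card_coe] at hcard ⊢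
  rw [Mbound]
  omega

theorem sumset_union_of_sumsets_of_subsets (q n : ℕ) (hq : IsPrimePow q) (hn : 0 < n)
    (F : Type*) [Field F] [Fintype F] (hF : Fintype.card F = q)
    (S T : Set (Fin n → F)) :
    ∃ S' T' : Set (Fin n → F), S' ⊆ S ∧ T' ⊆ T ∧
      Nat.card S' + Nat.card T' ≤ Mbound q n ∧
      (S' + T) ∪ (S + T') = S + T :=
  sumset_union_of_sumsets_of_subsets_general q n F hF S T
end

section
/- Let q be a prime power, n a positive integer, d a nonnegative real number, and let S and T be subsets of F_q^n. Then there exist a subset S' of S and a subset T' of T such that |S'| + |T'| ≤ 2·m_{d/2} + q^n − m_d and (S' + T) ∪ (S + T') = S + T. -/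
open Pointwise

/-!
Let `V` be the space of functions `𝔽_q^n → 𝔽_q` spanned by the reduced monomials of degree at
most `d`; evaluation identifies it with reduced polynomials, so `dim V = m_d`. Expanding
`(x + y)^a` binomially, every term has `x`-degree or `y`-degree at most `d / 2`, so each `f ∈ V`
satisfies `f (x + y) = Σ_b x^b G_b(y) + Σ_c H_c(x) y^c` with `b, c` among the `m_{d/2}`
reduced monomials of degree at most `d / 2`. Choose `S' ⊆ S` whose vectors `(x^b)_b` span those
of `S`, so `|S'| ≤ m_{d/2}`, and `T' ⊆ T` likewise. Then an `f ∈ V` vanishing on `S' + T` and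
on `S + T'` vanishes on all of `S + T`. So if `U` is the part of `S + T` not covered by
`(S' + T) ∪ (S + T')`, no nonzero `f ∈ V` vanishes off `U`, whence `m_d ≤ q^n - |U|`; adding to
`S'` one summand from `S` for each point of `U` finishes the proof.
-/

section SliceSpan

variable {R X Y ι κ : Type*} [CommRing R] [Fintype ι] [Fintype κ]

def sliceSpan (u : X → ι → R) (w : Y → κ → R) : Submodule R (X × Y → R) where
  carrier := {Φ | ∃ (G : Y → ι → R) (H : X → κ → R), ∀ x y, Φ (x, y) = u x ⬝ᵥ G y + H x ⬝ᵥ w y}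
  add_mem' := by
    rintro Φ Ψ ⟨G, H, hΦ⟩ ⟨G', H', hΨ⟩
    refine ⟨G + G', H + H', fun x y => ?_⟩
    simp only [Pi.add_apply, hΦ, hΨ, dotProduct_add, add_dotProduct]
    ring
  zero_mem' := ⟨0, 0, fun x y => by simp⟩
  smul_mem' := by
    rintro c Φ ⟨G, H, hΦ⟩
    refine ⟨c • G, c • H, fun x y => ?_⟩
    simp only [Pi.smul_apply, hΦ, dotProduct_smul, smul_dotProduct, smul_eq_mul, mul_add]

variable {u : X → ι → R} {w : Y → κ → R}

theorem mul_mem_sliceSpan_left [DecidableEq ι] (i : ι) (g : Y → R) :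
    (fun p : X × Y => u p.1 i * g p.2) ∈ sliceSpan u w :=
  ⟨fun y => Pi.single i (g y), 0, fun x y => by simp⟩

theorem mul_mem_sliceSpan_right [DecidableEq κ] (j : κ) (h : X → R) :
    (fun p : X × Y => h p.1 * w p.2 j) ∈ sliceSpan u w :=
  ⟨0, fun x => Pi.single j (h x), fun x y => by simp [mul_comm]⟩

theorem linearCombination_dotProduct {α : Type*} (v : α → ι → R) (l : α →₀ R) (z : ι → R) :
    Finsupp.linearCombination R v l ⬝ᵥ z = l.sum fun a c => c * (v a ⬝ᵥ z) := by
  simp [Finsupp.linearCombination_apply, Finsupp.sum, sum_dotProduct]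

theorem dotProduct_linearCombination {α : Type*} (v : α → ι → R) (l : α →₀ R) (z : ι → R) :
    z ⬝ᵥ Finsupp.linearCombination R v l = l.sum fun a c => c * (z ⬝ᵥ v a) := by
  simp [Finsupp.linearCombination_apply, Finsupp.sum, dotProduct_sum]

theorem forall_eq_zero_of_mem_sliceSpan {Φ : X × Y → R} (hΦ : Φ ∈ sliceSpan u w)
    {S S' : Set X} {T T' : Set Y} (hT' : T' ⊆ T)
    (hS : u '' S ⊆ Submodule.span R (u '' S')) (hT : w '' T ⊆ Submodule.span R (w '' T'))
    (hS'T : ∀ x ∈ S', ∀ y ∈ T, Φ (x, y) = 0) (hST' : ∀ x ∈ S, ∀ y ∈ T', Φ (x, y) = 0) :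
    ∀ x ∈ S, ∀ y ∈ T, Φ (x, y) = 0 := by
  obtain ⟨G, H, hΦ⟩ := hΦ
  intro x hx
  obtain ⟨l, hl, hlx⟩ :=
    (Finsupp.mem_span_image_iff_linearCombination R).mp (hS (Set.mem_image_of_mem u hx))
  -- Expanding `u x` over `S'` turns `Φ (x, ·)` on `T` into a linear functional of `w`.
  have hlin : ∀ y ∈ T, Φ (x, y) = (H x - Finsupp.linearCombination R H l) ⬝ᵥ w y := by
    intro y hy
    have hterm : ∀ p ∈ l.support, l p * (u p ⬝ᵥ G y) = -(l p * (H p ⬝ᵥ w y)) := by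
      intro p hp
      have := hS'T p (hl hp) y hy
      rw [hΦ] at this
      linear_combination l p * this
    rw [hΦ, ← hlx, linearCombination_dotProduct, sub_dotProduct, linearCombination_dotProduct,
      Finsupp.sum, Finsupp.sum, Finset.sum_congr rfl hterm, Finset.sum_neg_distrib]
    ring
  intro y hy
  obtain ⟨m, hm, hmy⟩ :=
    (Finsupp.mem_span_image_iff_linearCombination R).mp (hT (Set.mem_image_of_mem w hy))
  rw [hlin y hy, ← hmy, dotProduct_linearCombination]
  refine Finset.sum_eq_zero fun r hr => ?_
  dsimp only
  rw [← hlin r (hT' (hm hr)), hST' x hx r (hm hr), mul_zero]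

end SliceSpan

theorem exists_subset_ncard_le_finrank_image_subset_span {K V X : Type*} [DivisionRing K]
    [AddCommGroup V] [Module K V] [FiniteDimensional K V] (u : X → V) (S : Set X) :
    ∃ S' ⊆ S, S'.ncard ≤ Module.finrank K V ∧ u '' S ⊆ Submodule.span K (u '' S') := by
  obtain ⟨S', hS'S, -, hspan, hli⟩ :=
    exists_linearIndepOn_extension (linearIndepOn_empty K u) (Set.empty_subset S)
  refine ⟨S', hS'S, ?_, hspan⟩
  rw [← Nat.card_coe_set_eq, Nat.card, ← Cardinal.toNat_natCast (Module.finrank K V)]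
  exact Cardinal.toNat_le_toNat hli.cardinalMk_le_finrank Cardinal.natCast_lt_aleph0

theorem exists_subset_ncard_le_subset_add {G : Type*} [Add G] {S T U : Set G}
    (hU : U.Finite) (hUST : U ⊆ S + T) :
    ∃ S' ⊆ S, S'.ncard ≤ U.ncard ∧ U ⊆ S' + T := by
  have hdecomp : ∀ z ∈ U, ∃ a ∈ S, ∃ b ∈ T, a + b = z := fun z hz => hUST hz
  choose! s hs t ht hst using hdecomp
  refine ⟨s '' U, Set.image_subset_iff.mpr hs, Set.ncard_image_le hU, fun z hz => ?_⟩
  exact ⟨s z, Set.mem_image_of_mem s hz, t z, ht z hz, hst z hz⟩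

universe u v

theorem MvPolynomial.ker_evalₗ_domRestrict_restrictDegree {σ : Type v} {K : Type (max u v)}
    [Field K] [Fintype K] [Finite σ] :
    LinearMap.ker ((evalₗ K σ).domRestrict (restrictDegree σ K (Fintype.card K - 1))) = ⊥ := by
  classical
  rw [LinearMap.ker_eq_bot']
  rintro ⟨p, hp⟩ hp0
  -- The library statement needs the variables in the universe of `K`, hence the `ULift`.
  have hrename :
      rename ULift.up.{max u v} p ∈ restrictDegree (ULift σ) K (Fintype.card K - 1) := by
    rw [mem_restrictDegree] at hp ⊢
    rw [support_rename_of_injective ULift.up_injective]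
    intro s' hs' i
    obtain ⟨s, hs, rfl⟩ := Finset.mem_image.mp hs'
    rw [← ULift.up_down i, Finsupp.mapDomain_apply ULift.up_injective]
    exact hp s hs i.down
  have hzero := eq_zero_of_eval_eq_zero (ULift σ) K _
    (fun v => by rw [eval_rename]; exact congrFun hp0 (v ∘ ULift.up)) hrename
  exact Subtype.ext (rename_injective _ ULift.up_injective (hzero.trans (map_zero _).symm))

def monomialFun {σ R : Type*} [Fintype σ] [CommMonoid R] (a : σ → ℕ) (x : σ → R) : R :=
  ∏ i, x i ^ a i

theorem linearIndependent_monomialFun {σ : Type v} {K : Type (max u v)} [Fintype σ] [Field K]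
    [Fintype K] :
    LinearIndependent K
      (fun a : {a : σ → ℕ // ∀ i, a i ≤ Fintype.card K - 1} => monomialFun (R := K) a.1) := by
  classical
  let P := MvPolynomial.restrictDegree σ K (Fintype.card K - 1)
  let mono (a : {a : σ → ℕ // ∀ i, a i ≤ Fintype.card K - 1}) : P :=
    ⟨MvPolynomial.monomial (Finsupp.equivFunOnFinite.symm a.1) 1, by
      rw [MvPolynomial.mem_restrictDegree]
      intro s hs i
      rw [MvPolynomial.support_monomial, if_neg one_ne_zero, Finset.mem_singleton] at hs
      simpa [hs] using a.2 i⟩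
  have hmono : LinearIndependent K mono := by
    refine LinearIndependent.of_comp P.subtype ?_
    exact (MvPolynomial.basisMonomials σ K).linearIndependent.comp _
      (Finsupp.equivFunOnFinite.symm.injective.comp Subtype.val_injective)
  have heval : (MvPolynomial.evalₗ K σ).domRestrict P ∘ mono = fun a => monomialFun a.1 := by
    funext a x
    simp [mono, monomialFun, MvPolynomial.eval_monomial, Finsupp.prod_fintype]
  exact heval ▸ hmono.map' _ MvPolynomial.ker_evalₗ_domRestrict_restrictDegree

theorem monomialFun_add {σ R : Type*} [Fintype σ] [DecidableEq σ] [CommSemiring R] (a : σ → ℕ)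
    (x y : σ → R) :
    monomialFun a (x + y) =
      ∑ b ∈ Fintype.piFinset fun i => Finset.range (a i + 1),
        (∏ i, ((a i).choose (b i) : R)) * (monomialFun b x * monomialFun (a - b) y) := by
  simp only [monomialFun, Pi.add_apply, add_pow, Finset.prod_univ_sum, Pi.sub_apply,
    ← Finset.prod_mul_distrib]
  refine Finset.sum_congr rfl fun b _ => Finset.prod_congr rfl fun i _ => ?_
  ring

abbrev ReducedExponent (q n : ℕ) (d : ℝ) : Type :=
  {a : Fin n → ℕ // (∀ i, a i ≤ q - 1) ∧ ((∑ i, a i : ℕ) : ℝ) ≤ d}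

namespace ReducedExponent

variable {q n : ℕ} {d : ℝ}

instance : Finite (ReducedExponent q n d) :=
  Finite.of_injective (fun a i => (⟨a.1 i, Nat.lt_succ_of_le (a.2.1 i)⟩ : Fin (q - 1 + 1)))
    fun _ _ h => Subtype.ext (funext fun i => congrArg Fin.val (congrFun h i))

noncomputable instance : Fintype (ReducedExponent q n d) := Fintype.ofFinite _

theorem natCard_eq_mCount : Nat.card (ReducedExponent q n d) = mCount q n d := rfl

end ReducedExponent

section MonomialSpan

variable (q n : ℕ) (d : ℝ) (F : Type*) [Field F]

def monomialVector (x : Fin n → F) (a : ReducedExponent q n d) : F := monomialFun a.1 x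

def monomialSpan : Submodule F ((Fin n → F) → F) :=
  Submodule.span F (Set.range fun a : ReducedExponent q n d => monomialFun a.1)

variable {q n d F}

theorem finrank_monomialSpan [Fintype F] (hF : Fintype.card F = q) :
    Module.finrank F (monomialSpan q n d F) = mCount q n d := by
  subst hF
  have hall : LinearIndependent F fun a : {a : Fin n → ℕ // ∀ i, a i ≤ Fintype.card F - 1} =>
      monomialFun (R := F) a.1 := linearIndependent_monomialFun
  have hli := hall.comp (fun a : ReducedExponent (Fintype.card F) n d =>
    (⟨a.1, a.2.1⟩ : {a : Fin n → ℕ // ∀ i, a i ≤ Fintype.card F - 1}))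
    fun _ _ h => Subtype.ext (congrArg (fun b => b.1) h)
  have h2 := finrank_span_eq_card hli
  rw [Function.comp_def] at h2
  rw [monomialSpan, h2, ← Nat.card_eq_fintype_card, ReducedExponent.natCard_eq_mCount]

theorem monomialFun_add_mem_sliceSpan (a : ReducedExponent q n d) :
    (fun p : (Fin n → F) × (Fin n → F) => monomialFun a.1 (p.1 + p.2)) ∈
      sliceSpan (monomialVector q n (d / 2) F) (monomialVector q n (d / 2) F) := by
  classical
  simp_rw [monomialFun_add]
  refine (Finset.sum_fn _ _).subst (motive := (· ∈ _)) (Submodule.sum_mem _ fun b hb => ?_)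
  have hba : b ≤ a.1 := fun i =>
    Nat.lt_succ_iff.mp (Finset.mem_range.mp (Fintype.mem_piFinset.mp hb i))
  set c : F := ∏ i, ((a.1 i).choose (b i) : F)
  -- Of the two factors `x ^ b` and `y ^ (a - b)`, one has degree at most `d / 2`.
  by_cases hlow : ((∑ i, b i : ℕ) : ℝ) ≤ d / 2
  · convert mul_mem_sliceSpan_left (w := monomialVector q n (d / 2) F)
      (⟨b, fun i => (hba i).trans (a.2.1 i), hlow⟩ : ReducedExponent q n (d / 2))
      (fun y => c * monomialFun (a.1 - b) y) using 1
    funext p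
    simp only [monomialVector]
    ring
  · have hhigh : ((∑ i, (a.1 - b) i : ℕ) : ℝ) ≤ d / 2 := by
      have hsum :
          ((∑ i, (a.1 - b) i : ℕ) : ℝ) + ((∑ i, b i : ℕ) : ℝ) = ((∑ i, a.1 i : ℕ) : ℝ) := by
        rw [← Nat.cast_add, ← Finset.sum_add_distrib]
        exact congrArg _ (Finset.sum_congr rfl fun i _ => Nat.sub_add_cancel (hba i))
      linarith [a.2.2]
    convert mul_mem_sliceSpan_right (u := monomialVector q n (d / 2) F)
      (⟨a.1 - b, fun i => (Nat.sub_le _ _).trans (a.2.1 i), hhigh⟩ :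
        ReducedExponent q n (d / 2))
      (fun x => c * monomialFun b x) using 1
    funext p
    simp only [monomialVector]
    ring

theorem add_mem_sliceSpan {f : (Fin n → F) → F} (hf : f ∈ monomialSpan q n d F) :
    (fun p : (Fin n → F) × (Fin n → F) => f (p.1 + p.2)) ∈
      sliceSpan (monomialVector q n (d / 2) F) (monomialVector q n (d / 2) F) := by
  have hle : monomialSpan q n d F ≤ (sliceSpan (monomialVector q n (d / 2) F)
      (monomialVector q n (d / 2) F)).comap (LinearMap.funLeft F F fun p => p.1 + p.2) :=
    Submodule.span_le.mpr (Set.range_subset_iff.mpr monomialFun_add_mem_sliceSpan)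
  exact hle hf

end MonomialSpan

theorem mCount_add_ncard_le {q n : ℕ} {d : ℝ} {F : Type*} [Field F] [Fintype F]
    (hF : Fintype.card F = q) {S S' T T' : Set (Fin n → F)} (hT' : T' ⊆ T)
    (hS : monomialVector q n (d / 2) F '' S ⊆
      Submodule.span F (monomialVector q n (d / 2) F '' S'))
    (hT : monomialVector q n (d / 2) F '' T ⊆
      Submodule.span F (monomialVector q n (d / 2) F '' T')) :
    mCount q n d + ((S + T) \ (S' + T ∪ (S + T'))).ncard ≤ q ^ n := by
  classical
  set U := (S + T) \ (S' + T ∪ (S + T'))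
  let restrict : monomialSpan q n d F →ₗ[F] (↥Uᶜ → F) :=
    LinearMap.funLeft F F Subtype.val ∘ₗ (monomialSpan q n d F).subtype
  have hinj : Function.Injective restrict := by
    rw [← LinearMap.ker_eq_bot, LinearMap.ker_eq_bot']
    rintro ⟨f, hf⟩ hf0
    have hoff : ∀ z ∉ U, f z = 0 := fun z hz => congrFun hf0 ⟨z, hz⟩
    have hST : ∀ s ∈ S, ∀ t ∈ T, f (s + t) = 0 :=
      forall_eq_zero_of_mem_sliceSpan (add_mem_sliceSpan hf) hT' hS hT
        (fun s hs t ht => hoff _ fun hU => hU.2 (Or.inl (Set.add_mem_add hs ht)))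
        (fun s hs t ht => hoff _ fun hU => hU.2 (Or.inr (Set.add_mem_add hs ht)))
    refine Subtype.ext (funext fun z => ?_)
    by_cases hz : z ∈ S + T
    · obtain ⟨s, hs, t, ht, rfl⟩ := hz
      exact hST s hs t ht
    · exact hoff z fun hU => hz hU.1
  have hrank := LinearMap.finrank_le_finrank_of_injective hinj
  rw [finrank_monomialSpan hF, Module.finrank_fintype_fun_eq_card, ← Nat.card_eq_fintype_card,
    Nat.card_coe_set_eq] at hrank
  have hcard := Set.ncard_add_ncard_compl U
  rw [Nat.card_fun, Nat.card_eq_fintype_card, hF, Nat.card_fin] at hcard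
  omega

theorem sumset_union_of_sumsets_of_subsets_quantitative_general (q n : ℕ) (d : ℝ)
    (F : Type*) [Field F] [Fintype F] (hF : Fintype.card F = q)
    (S T : Set (Fin n → F)) :
    ∃ S' T' : Set (Fin n → F), S' ⊆ S ∧ T' ⊆ T ∧
      ((Nat.card S' : ℝ) + Nat.card T' ≤
        2 * mCount q n (d / 2) + (q : ℝ) ^ n - mCount q n d) ∧
      (S' + T) ∪ (S + T') = S + T := by
  have hdim : Module.finrank F (ReducedExponent q n (d / 2) → F) = mCount q n (d / 2) :=
    (Module.finrank_fintype_fun_eq_card F).trans Nat.card_eq_fintype_card.symm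
  obtain ⟨S', hS'S, hS'card, hS'span⟩ :=
    exists_subset_ncard_le_finrank_image_subset_span (K := F) (monomialVector q n (d / 2) F) S
  obtain ⟨T', hT'T, hT'card, hT'span⟩ :=
    exists_subset_ncard_le_finrank_image_subset_span (K := F) (monomialVector q n (d / 2) F) T
  have hUcard := mCount_add_ncard_le (d := d) hF hT'T hS'span hT'span
  set U := (S + T) \ (S' + T ∪ (S + T'))
  obtain ⟨S'', hS''S, hS''card, hUS''⟩ :=
    exists_subset_ncard_le_subset_add U.toFinite (Set.sdiff_subset : U ⊆ S + T)
  refine ⟨S' ∪ S'', T', Set.union_subset hS'S hS''S, hT'T, ?_, ?_⟩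
  · have hunion := Set.ncard_union_le S' S''
    have hsum : (S' ∪ S'').ncard + T'.ncard + mCount q n d ≤ 2 * mCount q n (d / 2) + q ^ n := by
      omega
    rw [Nat.card_coe_set_eq, Nat.card_coe_set_eq, le_sub_iff_add_le]
    exact_mod_cast hsum
  · refine (Set.union_subset (Set.add_subset_add_right (Set.union_subset hS'S hS''S))
      (Set.add_subset_add_left hT'T)).antisymm fun z hz => ?_
    by_cases hcov : z ∈ S' + T ∪ (S + T')
    · exact hcov.imp_left fun h => Set.add_subset_add_right Set.subset_union_left h
    · exact Or.inl (Set.add_subset_add_right Set.subset_union_right (hUS'' ⟨hz, hcov⟩))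

theorem sumset_union_of_sumsets_of_subsets_quantitative (q n : ℕ) (hq : IsPrimePow q)
    (hn : 0 < n) (d : ℝ) (hd : 0 ≤ d)
    (F : Type*) [Field F] [Fintype F] (hF : Fintype.card F = q)
    (S T : Set (Fin n → F)) :
    ∃ S' T' : Set (Fin n → F), S' ⊆ S ∧ T' ⊆ T ∧
      ((Nat.card S' : ℝ) + Nat.card T' ≤
        2 * mCount q n (d / 2) + (q : ℝ) ^ n - mCount q n d) ∧
      (S' + T) ∪ (S + T') = S + T :=
  sumset_union_of_sumsets_of_subsets_quantitative_general q n d F hF S T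
end

section
/- Let q be a prime power, n a positive integer, and let S be a subset of F_q^n containing no three-term arithmetic progression, i.e., there are no elements a, b, c ∈ S, not all equal, with a + c = 2b. Then |S| ≤ M(F_q^n). -/
/-!
Tao's slice-rank form of the Ellenberg–Gijswijt argument. For `a, b, c ∈ S` put
`T(a, b, c) = ∏ⱼ (1 - (aⱼ - 2bⱼ + cⱼ)^(q-1))`; since `1 - x^(q-1)` is the indicator of `0` on `𝔽_q`
and `S` has no nontrivial 3-term progression, `T` is nonzero exactly on the diagonal. Expanding the
product, every monomial `x^α y^β z^γ` has `αⱼ + βⱼ + γⱼ ≤ q - 1` in each coordinate, so one of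
`α, β, γ` has total degree at most `(q-1)n/3`; grouping the monomials by that factor writes `T` as a
sum of `3 m_{(q-1)n/3}` slices `f(a) g(b, c)`, `f(b) g(a, c)`, `f(c) g(a, b)`. A diagonal tensor with
nonzero diagonal needs at least `|S|` slices: contracting its first slot against a vector `h` with
large support that annihilates the first family leaves a diagonal matrix of rank `|supp h|`, which
factors through the two remaining families.
-/

open Pointwise

open Finset Polynomial

theorem Submodule.exists_mem_finrank_le_card_support {σ F : Type*} [Fintype σ] [Field F]
    [DecidableEq F] (W : Submodule F (σ → F)) :
    ∃ h ∈ W, Module.finrank F W ≤ Fintype.card {a // h a ≠ 0} := by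
  set supportCard : (σ → F) → ℕ := fun h => Fintype.card {a // h a ≠ 0}
  have hbdd : BddAbove (supportCard '' W) :=
    ⟨Fintype.card σ, by rintro _ ⟨h, -, rfl⟩; exact Fintype.card_subtype_le _⟩
  obtain ⟨h, hW, hmax⟩ := Nat.sSup_mem (s := supportCard '' W) ⟨_, 0, W.zero_mem, rfl⟩ hbdd
  refine ⟨h, hW, ?_⟩
  rw [← Module.finrank_fintype_fun_eq_card (R := F)]
  refine LinearMap.finrank_le_finrank_of_injective (f := (LinearMap.funLeft F F
    (Subtype.val : {a // h a ≠ 0} → σ)).comp W.subtype) ?_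
  rw [← LinearMap.ker_eq_bot, LinearMap.ker_eq_bot']
  rintro ⟨w, hw⟩ hw0
  have hvanish : ∀ a, h a ≠ 0 → w a = 0 := fun a ha => congrFun hw0 ⟨a, ha⟩
  by_contra hne
  obtain ⟨b, hb⟩ : ∃ b, w b ≠ 0 := by simpa [funext_iff] using hne
  have hhb : h b = 0 := not_not.1 (mt (hvanish b) hb)
  -- `h` has a support of maximal size, but `h + w` would have a larger one
  have hlt : supportCard h < supportCard (h + w) := by
    simp only [supportCard, Fintype.card_subtype]
    exact card_lt_card (ssubset_iff_of_subset (fun a ha => by simp_all) |>.2 ⟨b, by simp_all⟩)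
  exact hlt.not_ge (le_csSup hbdd ⟨h + w, W.add_mem hW hw, rfl⟩ |>.trans_eq hmax.symm)

theorem Finset.sum_filter_mem_mul_eq_sum_coe_sort {κ ι R : Type*} [CommSemiring R]
    [DecidableEq ι] (P : Finset κ) (A : Finset ι) (π : κ → ι) (u : ι → R) (g : κ → R) :
    ∑ p ∈ P with π p ∈ A, u (π p) * g p = ∑ i : A, u i * ∑ p ∈ P with π p = i, g p := by
  rw [← sum_fiberwise_eq_sum_filter, ← sum_coe_sort A]
  refine Fintype.sum_congr _ _ fun i => ?_
  rw [mul_sum]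
  exact sum_congr rfl fun p hp => by rw [(mem_filter.1 hp).2]

section SliceRank

variable {σ F : Type*} [Fintype σ] [Field F]

theorem card_le_of_eq_sum_slices {ι₁ ι₂ ι₃ : Type*} [Fintype ι₁] [Fintype ι₂] [Fintype ι₃]
    (T : σ → σ → σ → F) (hT : ∀ a b c, T a b c ≠ 0 ↔ a = b ∧ b = c)
    (f₁ : ι₁ → σ → F) (g₁ : ι₁ → σ → σ → F) (f₂ : ι₂ → σ → F) (g₂ : ι₂ → σ → σ → F)
    (f₃ : ι₃ → σ → F) (g₃ : ι₃ → σ → σ → F)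
    (hslice : ∀ a b c, T a b c =
      ∑ i, f₁ i a * g₁ i b c + ∑ i, f₂ i b * g₂ i a c + ∑ i, f₃ i c * g₃ i a b) :
    Fintype.card σ ≤ Fintype.card ι₁ + Fintype.card ι₂ + Fintype.card ι₃ := by
  classical
  have hK : Fintype.card σ ≤
      Fintype.card ι₁ + Module.finrank F (Matrix.of f₁).mulVecLin.ker := by
    have hrank := (Matrix.of f₁).rank_le_card_height
    have := LinearMap.finrank_range_add_finrank_ker (Matrix.of f₁).mulVecLin
    rw [Module.finrank_fintype_fun_eq_card] at this
    rw [Matrix.rank] at hrank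
    omega
  obtain ⟨h, hhK, hsupp⟩ := (Matrix.of f₁).mulVecLin.ker.exists_mem_finrank_le_card_support
  have hh : ∀ i, ∑ a, f₁ i a * h a = 0 := congrFun (LinearMap.mem_ker.1 hhK)
  let N : Matrix σ σ F := Matrix.of fun b c => ∑ a, h a * T a b c
  have hN_diag : N = Matrix.diagonal fun b => h b * T b b b := by
    ext b c
    by_cases hbc : b = c
    · subst hbc
      refine (Fintype.sum_eq_single b fun a hab => ?_).trans (by simp)
      simp [not_not.1 (mt (hT a b b).1 (by tauto))]
    · simp only [Matrix.diagonal_apply_ne _ hbc]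
      exact Fintype.sum_eq_zero _ fun a => by simp [not_not.1 (mt (hT a b c).1 (by tauto))]
  have hN_mul : N =
      Matrix.of (fun b (i : ι₂ ⊕ ι₃) => i.elim (f₂ · b) fun i => ∑ a, h a * g₃ i a b) *
      Matrix.of (fun (i : ι₂ ⊕ ι₃) c => i.elim (fun i => ∑ a, h a * g₂ i a c) (f₃ · c)) := by
    ext b c
    have hfirst : ∑ a, ∑ i, h a * (f₁ i a * g₁ i b c) = 0 := by
      rw [Finset.sum_comm]
      refine Fintype.sum_eq_zero _ fun i => ?_
      rw [← zero_mul (g₁ i b c), ← hh i, Finset.sum_mul]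
      exact Fintype.sum_congr _ _ fun a => by ring
    simp only [N, Matrix.of_apply, Matrix.mul_apply, Fintype.sum_sum_type, Sum.elim_inl,
      Sum.elim_inr, hslice, mul_add, Finset.sum_add_distrib, Finset.mul_sum, Finset.sum_mul,
      hfirst, zero_add]
    rw [Finset.sum_comm, Finset.sum_comm (f := fun a i => h a * (f₃ i c * g₃ i a b))]
    congr 1 <;> exact Fintype.sum_congr _ _ fun i => Fintype.sum_congr _ _ fun a => by ring
  have hrank_diag : N.rank = Fintype.card {b // h b ≠ 0} := by
    rw [hN_diag, Matrix.rank_diagonal]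
    exact Fintype.card_congr (Equiv.subtypeEquivRight fun b => by simp [hT])
  have hrank_mul : N.rank ≤ Fintype.card ι₂ + Fintype.card ι₃ := by
    rw [hN_mul, ← Fintype.card_sum]
    exact (Matrix.rank_mul_le_left _ _).trans (Matrix.rank_le_card_width _)
  omega

theorem card_le_three_mul_card_of_eq_sum_monomials {κ ι : Type*} [DecidableEq ι]
    (T : σ → σ → σ → F) (hT : ∀ a b c, T a b c ≠ 0 ↔ a = b ∧ b = c)
    (P : Finset κ) (A : Finset ι) (π₁ π₂ π₃ : κ → ι)
    (hP : ∀ p ∈ P, π₁ p ∈ A ∨ π₂ p ∈ A ∨ π₃ p ∈ A) (coeff : κ → F) (u₁ u₂ u₃ : ι → σ → F)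
    (hsum : ∀ a b c, T a b c = ∑ p ∈ P, coeff p * u₁ (π₁ p) a * u₂ (π₂ p) b * u₃ (π₃ p) c) :
    Fintype.card σ ≤ 3 * #A := by
  set Q := P.filter fun p => π₁ p ∉ A
  set R := Q.filter fun p => π₂ p ∉ A
  have hR : R.filter (fun p => π₃ p ∈ A) = R := filter_true_of_mem fun p hp => by
    simp only [R, Q, mem_filter] at hp
    have := hP p hp.1.1
    tauto
  have := card_le_of_eq_sum_slices T hT (fun i : A => u₁ i)
    (fun i b c => ∑ p ∈ P with π₁ p = i, coeff p * u₂ (π₂ p) b * u₃ (π₃ p) c) (fun i : A => u₂ i)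
    (fun i a c => ∑ p ∈ Q with π₂ p = i, coeff p * u₁ (π₁ p) a * u₃ (π₃ p) c) (fun i : A => u₃ i)
    (fun i a b => ∑ p ∈ R with π₃ p = i, coeff p * u₁ (π₁ p) a * u₂ (π₂ p) b) fun a b c => by
      rw [← sum_filter_mem_mul_eq_sum_coe_sort P A π₁ (u₁ · a),
        ← sum_filter_mem_mul_eq_sum_coe_sort Q A π₂ (u₂ · b),
        ← sum_filter_mem_mul_eq_sum_coe_sort R A π₃ (u₃ · c), hR, hsum,
        ← sum_filter_add_sum_filter_not P (fun p => π₁ p ∈ A),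
        ← sum_filter_add_sum_filter_not Q (fun p => π₂ p ∈ A), add_assoc]
      congr 1
      · exact sum_congr rfl fun p _ => by ring
      congr 1 <;> exact sum_congr rfl fun p _ => by ring
  rw [Fintype.card_coe] at this
  omega

end SliceRank

section Expansion

variable {κ ι R : Type*} [Fintype κ] [DecidableEq κ] [CommSemiring R]

variable (κ) in
def exponentsOfDegreeLE (m : ℕ) : Finset (κ → ℕ) := (range (m + 1)).biUnion (piAntidiag univ)

theorem sum_le_of_mem_exponentsOfDegreeLE {m : ℕ} {e : κ → ℕ}
    (he : e ∈ exponentsOfDegreeLE κ m) : ∑ k, e k ≤ m := by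
  obtain ⟨l, hl, he⟩ := mem_biUnion.1 he
  rw [(mem_piAntidiag.1 he).1]
  exact Nat.le_of_lt_succ (mem_range.1 hl)

theorem Polynomial.eval_sum_eq_sum_exponentsOfDegreeLE (φ : R[X]) {m : ℕ}
    (hφ : φ.natDegree ≤ m) (u : κ → R) :
    φ.eval (∑ k, u k) = ∑ e ∈ exponentsOfDegreeLE κ m,
      φ.coeff (∑ k, e k) * Nat.multinomial univ e * ∏ k, u k ^ e k := by
  rw [eval_eq_sum_range' (Nat.lt_succ_of_le hφ), exponentsOfDegreeLE, sum_biUnion]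
  · refine sum_congr rfl fun l _ => ?_
    rw [sum_pow_eq_sum_piAntidiag, mul_sum]
    exact sum_congr rfl fun e he => by rw [(mem_piAntidiag.1 he).1, mul_assoc]
  · exact fun l _ l' _ hne => disjoint_left.2 fun e he he' =>
      hne ((mem_piAntidiag.1 he).1.symm.trans (mem_piAntidiag.1 he').1)

theorem Polynomial.prod_eval_sum_eq_sum_exponentsOfDegreeLE [Fintype ι] [DecidableEq ι]
    (φ : R[X]) {m : ℕ} (hφ : φ.natDegree ≤ m) (u : κ → ι → R) :
    ∏ j, φ.eval (∑ k, u k j) = ∑ p ∈ Fintype.piFinset fun _ : ι => exponentsOfDegreeLE κ m,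
      (∏ j, φ.coeff (∑ k, p j k) * Nat.multinomial univ (p j)) * ∏ k, ∏ j, u k j ^ p j k := by
  simp_rw [φ.eval_sum_eq_sum_exponentsOfDegreeLE hφ, prod_univ_sum]
  exact sum_congr rfl fun p _ => by rw [prod_mul_distrib, prod_comm (s := univ) (t := univ)]

end Expansion

theorem FiniteField.prod_one_sub_pow_card_sub_one_ne_zero_iff {F ι : Type*} [Field F]
    [Fintype F] [Fintype ι] (x : ι → F) :
    ∏ j, (1 - x j ^ (Fintype.card F - 1)) ≠ 0 ↔ x = 0 := by
  have hpos : Fintype.card F - 1 ≠ 0 := Nat.sub_ne_zero_of_lt Fintype.one_lt_card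
  simp only [prod_ne_zero_iff, mem_univ, true_implies, funext_iff, Pi.zero_apply]
  refine forall_congr' fun j => ?_
  by_cases hx : x j = 0
  · simp [hx, zero_pow hpos]
  · simp [hx, FiniteField.pow_card_sub_one_eq_one _ hx]

theorem prod_one_sub_pow_ne_zero_iff_of_no_three_term_ap {F ι : Type*} [Field F] [Fintype F]
    [Fintype ι] {S : Set (ι → F)}
    (hS : ∀ a ∈ S, ∀ b ∈ S, ∀ c ∈ S, a + c = 2 • b → a = b ∧ b = c) {a b c : ι → F}
    (ha : a ∈ S) (hb : b ∈ S) (hc : c ∈ S) :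
    ∏ j, (1 - (a j - 2 * b j + c j) ^ (Fintype.card F - 1)) ≠ 0 ↔ a = b ∧ b = c := by
  have hdiff : (fun j => a j - 2 * b j + c j) = a + c - 2 • b := by
    ext j
    simp only [Pi.add_apply, Pi.sub_apply, two_nsmul]
    ring
  rw [FiniteField.prod_one_sub_pow_card_sub_one_ne_zero_iff (fun j => a j - 2 * b j + c j), hdiff,
    sub_eq_zero]
  refine ⟨hS a ha b hb c hc, ?_⟩
  rintro ⟨rfl, rfl⟩
  exact (two_nsmul a).symm

theorem exists_sum_le_mul_card_div_card {ι κ : Type*} [Fintype ι] [Fintype κ] [Nonempty κ]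
    (p : ι → κ → ℕ) {m : ℕ} (hp : ∀ j, ∑ k, p j k ≤ m) :
    ∃ k, ((∑ j, p j k : ℕ) : ℝ) ≤ m * Fintype.card ι / Fintype.card κ := by
  obtain ⟨k, -, hk⟩ := exists_le_of_sum_le (s := univ) univ_nonempty
    (f := fun k => ((∑ j, p j k : ℕ) : ℝ)) (g := fun _ => m * Fintype.card ι / Fintype.card κ) (by
      rw [sum_const, card_univ, nsmul_eq_mul, mul_div_cancel₀ _ (by positivity), ← Nat.cast_sum,
        sum_comm, ← Nat.cast_mul, Nat.cast_le]
      simpa [mul_comm] using sum_le_sum fun j (_ : j ∈ univ) => hp j)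
  exact ⟨k, hk⟩

noncomputable def mExponents (q n : ℕ) (d : ℝ) : Finset (Fin n → ℕ) :=
  {α ∈ Fintype.piFinset fun _ => Iic (q - 1) | ((∑ i, α i : ℕ) : ℝ) ≤ d}

theorem mCount_eq_card_mExponents (q n : ℕ) (d : ℝ) : mCount q n d = #(mExponents q n d) := by
  rw [mCount, ← Nat.card_eq_finsetCard]
  exact Nat.card_congr (Equiv.subtypeEquivRight fun α => by simp [mExponents])

theorem exists_mem_mExponents {q n : ℕ} (hq : 1 ≤ q) (p : Fin n → Fin 3 → ℕ)
    (hp : ∀ j, ∑ k, p j k ≤ q - 1) :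
    ∃ k, (fun j => p j k) ∈ mExponents q n (((q : ℝ) - 1) * n / 3) := by
  obtain ⟨k, hk⟩ := exists_sum_le_mul_card_div_card p hp
  refine ⟨k, mem_filter.2 ⟨Fintype.mem_piFinset.2 fun j => mem_Iic.2 ?_, ?_⟩⟩
  · exact (single_le_sum (fun _ _ => Nat.zero_le _) (mem_univ k)).trans (hp j)
  · simpa [Nat.cast_sub hq] using hk

theorem card_le_of_no_three_term_ap_general (q n : ℕ)
    (F : Type*) [Field F] [Fintype F] (hF : Fintype.card F = q)
    (S : Set (Fin n → F))
    (hS : ∀ a ∈ S, ∀ b ∈ S, ∀ c ∈ S, a + c = 2 • b → a = b ∧ b = c) :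
    Nat.card S ≤ Mbound q n := by
  classical
  subst hF
  set φ : F[X] := 1 - X ^ (Fintype.card F - 1)
  have hφ : φ.natDegree ≤ Fintype.card F - 1 := (natDegree_sub_le _ _).trans (by simp)
  let u (a b c : S) : Fin 3 → Fin n → F := ![a, -(2 • (b : Fin n → F)), c]
  let T (a b c : S) : F := ∏ j, φ.eval (∑ k, u a b c k j)
  have hT : ∀ a b c, T a b c ≠ 0 ↔ a = b ∧ b = c := fun a b c => by
    simpa [T, u, φ, Fin.sum_univ_three, sub_eq_add_neg, Subtype.ext_iff] using
      prod_one_sub_pow_ne_zero_iff_of_no_three_term_ap hS a.2 b.2 c.2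
  rw [Nat.card_eq_fintype_card, Mbound, mCount_eq_card_mExponents]
  refine card_le_three_mul_card_of_eq_sum_monomials T hT
    (Fintype.piFinset fun _ => exponentsOfDegreeLE (Fin 3) (Fintype.card F - 1)) _
    (fun p j => p j 0) (fun p j => p j 1) (fun p j => p j 2) (fun p hp => ?_)
    (fun p => ∏ j, φ.coeff (∑ k, p j k) * Nat.multinomial univ (p j))
    (fun α a => ∏ j, (a : Fin n → F) j ^ α j) (fun α b => ∏ j, (-(2 • (b : Fin n → F))) j ^ α j)
    (fun α c => ∏ j, (c : Fin n → F) j ^ α j) fun a b c => ?_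
  · obtain ⟨k, hk⟩ := exists_mem_mExponents Fintype.card_pos p
      fun j => sum_le_of_mem_exponentsOfDegreeLE (Fintype.mem_piFinset.1 hp j)
    fin_cases k <;> simp_all
  · show ∏ j, φ.eval (∑ k, u a b c k j) = _
    rw [φ.prod_eval_sum_eq_sum_exponentsOfDegreeLE hφ]
    exact sum_congr rfl fun p _ => by simp [Fin.prod_univ_three, u, mul_assoc]

theorem card_le_of_no_three_term_ap (q n : ℕ) (hq : IsPrimePow q) (hn : 0 < n)
    (F : Type*) [Field F] [Fintype F] (hF : Fintype.card F = q)
    (S : Set (Fin n → F))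
    (hS : ∀ a ∈ S, ∀ b ∈ S, ∀ c ∈ S, a + c = 2 • b → a = b ∧ b = c) :
    Nat.card S ≤ Mbound q n :=
  card_le_of_no_three_term_ap_general q n F hF S hS
end

section
/- (Meshulam) Let k be a field, n a positive integer, and W a linear subspace of the space of n × n matrices over k. For each nonzero w ∈ W let p(w) ∈ {1,…,n} × {1,…,n} be the lexicographically first pair (i, j) such that the entry w_{ij} is nonzero, and let Σ be the set of all p(w) as w ranges over the nonzero elements of W. Suppose every matrix in W has rank at most r. Then there exist a set R of rows and a set C of columns with |R| + |C| ≤ r such that every element (i, j) of Σ satisfies i ∈ R or j ∈ C. -/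
/-!
View the set of leading positions as a bipartite graph between rows and columns. By König's
theorem a minimum vertex cover has the size of a maximum matching, so it suffices that a matching
`(i₁, j₁), …, (iₘ, jₘ)` of leading positions yields an element of `W` of rank at least `m`.
Let `wₜ ∈ W` have leading position `(iₜ, jₜ)` and restrict everything to the rows `iₜ` and the
columns `jₜ`. The restriction of `wₜ` vanishes on the rows `iᵤ < iₜ`, and its row `iₜ` is
triangular in the column order with nonzero diagonal entry, so the matrix formed by these rows is
invertible. Replacing its rows one at a time, in increasing row order, by those of a suitable
combination of the `wₜ` keeps the determinant nonzero, since it is affine in the row being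
replaced. The result is an element of `W` with an invertible `m × m` submatrix.
-/

open Finset Function Matrix

namespace Finset

variable {α β : Type*}

def IsMatching (M : Finset (α × β)) : Prop :=
  Set.InjOn Prod.fst (M : Set (α × β)) ∧ Set.InjOn Prod.snd (M : Set (α × β))

variable [DecidableEq β]

theorem biUnion_disjSum_univ {γ : Type*} [Fintype γ] [DecidableEq γ] {s : Finset α}
    (hs : s.Nonempty) (t : α → Finset β) :
    s.biUnion (fun a => (t a).disjSum (univ : Finset γ)) = (s.biUnion t).disjSum univ := by
  ext (b | c)
  · simp
  · simp only [mem_biUnion, inr_mem_disjSum, mem_univ, and_true]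
    exact iff_true_intro hs

variable [DecidableEq α]

def neighbors (E : Finset (α × β)) (a : α) : Finset β :=
  (E.filter (·.1 = a)).image Prod.snd

@[simp]
theorem mem_neighbors {E : Finset (α × β)} {a : α} {b : β} :
    b ∈ E.neighbors a ↔ (a, b) ∈ E := by
  simp [neighbors]

theorem exists_isMatching_card_add_le [Fintype α] (E : Finset (α × β)) (d : ℕ)
    (hE : ∀ s : Finset α, #s ≤ #(s.biUnion E.neighbors) + d) :
    ∃ M ⊆ E, M.IsMatching ∧ Fintype.card α ≤ #M + d := by
  -- Hall's theorem, after giving every row access to `d` extra dummy columns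
  obtain ⟨f, hf, hft⟩ := (all_card_le_biUnion_card_iff_exists_injective
    fun a => (E.neighbors a).disjSum (univ : Finset (Fin d))).1 fun s => by
      rcases s.eq_empty_or_nonempty with rfl | hs
      · simp
      · simpa [biUnion_disjSum_univ hs] using hE s
  set M := E.filter fun p => f p.1 = .inl p.2
  refine ⟨M, filter_subset _ _, ⟨?_, ?_⟩, ?_⟩
  · rintro p hp q hq (hpq : p.1 = q.1)
    simp only [M, coe_filter, Set.mem_ofPred_eq] at hp hq
    exact Prod.ext hpq (Sum.inl_injective (hp.2.symm.trans (hpq ▸ hq.2)))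
  · rintro p hp q hq (hpq : p.2 = q.2)
    simp only [M, coe_filter, Set.mem_ofPred_eq] at hp hq
    exact Prod.ext (hf (hp.2.trans (hpq ▸ hq.2.symm))) hpq
  · calc Fintype.card α ≤ #((M.image Prod.snd).disjSum (univ : Finset (Fin d))) := by
          refine card_le_card_of_injOn f (fun a _ => ?_) hf.injOn
          have hfa := hft a
          rcases h : f a with b | c <;> rw [h] at hfa
          · simp only [inl_mem_disjSum, mem_neighbors] at hfa
            simp only [mem_coe, inl_mem_disjSum, mem_image, mem_filter, M]
            exact ⟨(a, b), ⟨hfa, h⟩, rfl⟩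
          · simp
      _ ≤ #M + d := by
          rw [card_disjSum, card_univ, Fintype.card_fin]
          exact Nat.add_le_add_right card_image_le d

theorem exists_cover_card_le_of_isMatching_card_le [Fintype α] (E : Finset (α × β)) (r : ℕ)
    (hE : ∀ M ⊆ E, M.IsMatching → #M ≤ r) :
    ∃ (R : Finset α) (C : Finset β), #R + #C ≤ r ∧ ∀ p ∈ E, p.1 ∈ R ∨ p.2 ∈ C := by
  -- the cover consists of the rows outside a set `S` of maximal deficiency `#S - #N(S)`,
  -- together with `N(S)`
  obtain ⟨S, -, hS⟩ := exists_max_image univ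
    (fun s : Finset α => (#s : ℤ) - #(s.biUnion E.neighbors)) univ_nonempty
  have hS₀ : #(S.biUnion E.neighbors) ≤ #S := by simpa using hS ∅ (mem_univ _)
  obtain ⟨M, hME, hM, hcard⟩ := exists_isMatching_card_add_le E (#S - #(S.biUnion E.neighbors))
    fun s => by have := hS s (mem_univ _); omega
  refine ⟨univ \ S, S.biUnion E.neighbors, ?_, fun p hp => ?_⟩
  · have := hE M hME hM
    have := card_le_univ S
    rw [card_sdiff_of_subset (subset_univ S), card_univ]
    omega
  · by_cases h : p.1 ∈ S
    · exact .inr (mem_biUnion.2 ⟨p.1, h, mem_neighbors.2 hp⟩)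
    · exact .inl (mem_sdiff.2 ⟨mem_univ _, h⟩)

end Finset

namespace Matrix

variable {ι α β k : Type*} [Fintype ι] [DecidableEq ι]

theorem BlockTriangular.det_of_injective {R : Type*} [CommRing R] [LinearOrder β]
    {D : Matrix ι ι R} {j : ι → β} (hD : D.BlockTriangular j) (hj : Injective j) :
    D.det = ∏ t, D t t := by
  let : LinearOrder ι := LinearOrder.lift' j hj
  exact det_of_isUpperTriangular hD

theorem exists_mem_det_ne_zero_of_rows [Field k] [LinearOrder β]
    (V : Submodule k (Matrix ι ι k)) (B : ι → Matrix ι ι k) (hBV : ∀ t, B t ∈ V)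
    (i : ι → β) (hi : Injective i) (hB : ∀ t u, i u < i t → B t u = 0)
    (hdet : (of fun t => B t t).det ≠ 0) :
    ∃ A ∈ V, A.det ≠ 0 := by
  suffices ∀ S : Finset ι, ∃ A ∈ V, (of fun t => if t ∈ S then A t else B t t).det ≠ 0 by
    obtain ⟨A, hAV, hA⟩ := this univ
    simp only [mem_univ, if_true] at hA
    exact ⟨A, hAV, hA⟩
  intro S
  induction S using Finset.induction_on_max_value i with
  | empty => exact ⟨0, V.zero_mem, by simpa using hdet⟩
  | insert a S haS hSa ih =>
    obtain ⟨A, hAV, hA⟩ := ih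
    set N : Matrix ι ι k := of fun t => if t ∈ S then A t else B t t
    set c := (1 - (N.updateRow a (A a)).det) / N.det
    -- adding `c • B a` to `A` leaves the rows of `S` alone, as they lie below row `a`
    have hrows : (of fun t => if t ∈ insert a S then (A + c • B a) t else B t t) =
        N.updateRow a (A a + c • B a a) := by
      ext t : 1
      rcases eq_or_ne t a with rfl | hta
      · simp
      · by_cases htS : t ∈ S
        · have : B a t = 0 := hB a t ((hSa t htS).lt_of_ne (hi.ne hta))
          simp [N, htS, hta, this]
        · simp [N, htS, hta]
    have hNa : N.updateRow a (B a a) = N := by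
      convert N.updateRow_eq_self a using 2
      exact (if_neg haS).symm
    refine ⟨A + c • B a, V.add_mem hAV (V.smul_mem c (hBV a)), ?_⟩
    rw [hrows, det_updateRow_add, det_updateRow_smul, hNa, div_mul_cancel₀ _ hA]
    simp

def submatrixLinearMap (k : Type*) [Semiring k] (r : ι → α) (c : ι → β) :
    Matrix α β k →ₗ[k] Matrix ι ι k where
  toFun A := A.submatrix r c
  map_add' _ _ := rfl
  map_smul' _ _ := rfl

/-- Unlike `Matrix.IsLeadingEntry`, which concerns a single row, this is the position of the
lexicographically first nonzero entry of the whole matrix. -/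
def IsLexLeadingEntry [Zero k] [LinearOrder α] [LinearOrder β] (w : Matrix α β k) (i : α)
    (j : β) : Prop :=
  w i j ≠ 0 ∧ ∀ i' j', w i' j' ≠ 0 → toLex ((i, j) : α × β) ≤ toLex (i', j')

theorem IsLexLeadingEntry.apply_eq_zero [Zero k] [LinearOrder α] [LinearOrder β]
    {w : Matrix α β k} {i i' : α} {j j' : β} (hw : w.IsLexLeadingEntry i j)
    (h : toLex (i', j') < toLex (i, j)) : w i' j' = 0 :=
  not_not.1 fun hne => (hw.2 i' j' hne).not_gt h

theorem exists_mem_card_le_rank_of_isMatching [Fintype β] [LinearOrder α] [LinearOrder β]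
    [Field k] (W : Submodule k (Matrix α β k)) {M : Finset (α × β)} (hM : M.IsMatching)
    (hlead : ∀ p ∈ M, ∃ w ∈ W, w.IsLexLeadingEntry p.1 p.2) :
    ∃ A ∈ W, #M ≤ A.rank := by
  choose w hwW hw using fun p : M => hlead p p.2
  let i : M → α := fun p => p.1.1
  let j : M → β := fun p => p.1.2
  have hi : Injective i := fun p q h => Subtype.ext (hM.1 p.2 q.2 h)
  have hj : Injective j := fun p q h => Subtype.ext (hM.2 p.2 q.2 h)
  let B : M → Matrix M M k := fun t => (w t).submatrix i j
  have hB : ∀ t u, i u < i t → B t u = 0 := fun t u h => funext fun v =>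
    (hw t).apply_eq_zero (Prod.Lex.toLex_lt_toLex.2 (.inl h))
  have hdiag : (of fun t => B t t).BlockTriangular j := fun t v h =>
    (hw t).apply_eq_zero (Prod.Lex.toLex_lt_toLex.2 (.inr ⟨rfl, h⟩))
  have hdet : (of fun t => B t t).det ≠ 0 := by
    rw [hdiag.det_of_injective hj]
    exact prod_ne_zero_iff.2 fun t _ => (hw t).1
  obtain ⟨_, ⟨A, hAW, rfl⟩, hA⟩ := exists_mem_det_ne_zero_of_rows
    (W.map (submatrixLinearMap k i j)) B (fun t => ⟨w t, hwW t, rfl⟩) i hi hB hdet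
  replace hA : (A.submatrix i j).det ≠ 0 := hA
  refine ⟨A, hAW, ?_⟩
  calc #M = (A.submatrix i j).rank := by
        rw [rank_of_isUnit _ (isUnit_iff_isUnit_det _ |>.2 hA.isUnit), Fintype.card_coe]
    _ ≤ A.rank := rank_submatrix_le A i j

end Matrix

theorem meshulam_low_rank_cover_general (k : Type*) [Field k] (n : ℕ)
    (W : Submodule k (Matrix (Fin n) (Fin n) k)) (r : ℕ)
    (hrank : ∀ w ∈ W, Matrix.rank w ≤ r) :
    ∃ R C : Finset (Fin n), R.card + C.card ≤ r ∧
      ∀ w ∈ W, w ≠ 0 → ∀ i j : Fin n,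
        (w i j ≠ 0 ∧ ∀ i' j' : Fin n, w i' j' ≠ 0 →
          toLex ((i, j) : Fin n × Fin n) ≤ toLex (i', j')) →
        i ∈ R ∨ j ∈ C := by
  classical
  let leading : Finset (Fin n × Fin n) := {p | ∃ w ∈ W, w.IsLexLeadingEntry p.1 p.2}
  obtain ⟨R, C, hcard, hcover⟩ := exists_cover_card_le_of_isMatching_card_le leading r
    fun M hM hmatch => by
      obtain ⟨A, hAW, hMA⟩ := exists_mem_card_le_rank_of_isMatching W hmatch
        fun p hp => by simpa [leading] using hM hp
      exact hMA.trans (hrank A hAW)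
  exact ⟨R, C, hcard, fun w hw _ i j hij =>
    hcover (i, j) (by simpa [leading] using ⟨w, hw, hij⟩)⟩

/-- **Meshulam's theorem on spaces of low-rank matrices.**  If every matrix in a linear
subspace `W` of `n × n` matrices has rank at most `r`, then there are a set `R` of rows and
a set `C` of columns with `|R| + |C| ≤ r` covering the leading (lexicographically first
nonzero) position of every nonzero matrix in `W`. -/
theorem meshulam_low_rank_cover (k : Type*) [Field k] (n : ℕ) (hn : 0 < n)
    (W : Submodule k (Matrix (Fin n) (Fin n) k)) (r : ℕ)
    (hrank : ∀ w ∈ W, Matrix.rank w ≤ r) :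
    ∃ R C : Finset (Fin n), R.card + C.card ≤ r ∧
      ∀ w ∈ W, w ≠ 0 → ∀ i j : Fin n,
        (w i j ≠ 0 ∧ ∀ i' j' : Fin n, w i' j' ≠ 0 →
          toLex ((i, j) : Fin n × Fin n) ≤ toLex (i', j')) →
        i ∈ R ∨ j ∈ C :=
  meshulam_low_rank_cover_general k n W r hrank
end

section
/- (Croot–Lev–Pach rank lemma) Let q be a prime power, n a positive integer, and d a nonnegative real number. Let P be a polynomial in F_q[x_1, …, x_n] of degree at most q−1 in each variable and total degree at most d. Then for any finite subsets S, T of F_q^n, the S × T matrix whose (s, t) entry is P(s + t) has rank at most 2·m_{d/2}. -/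
open Pointwise

/-!
Expanding `P(s + t) = ∑ₐ cₐ ∏ᵢ (sᵢ + tᵢ)^{aᵢ}` binomially writes it as a linear combination of
products `s^b t^c` with `b + c` the exponent of a monomial of `P`. Since `|b| + |c| ≤ d`, every
term has `|b| ≤ d/2` or `|c| ≤ d/2`. Grouping the first kind by `b` and the second kind by `c`
writes the matrix as a sum of at most `2 m_{d/2}` matrices of rank one.
-/

open Finset

namespace Matrix

variable {F m l ι κ : Type*} [Field F] [Fintype l]

theorem rank_add_le (A B : Matrix m l F) : (A + B).rank ≤ A.rank + B.rank := by
  unfold rank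
  rw [mulVecLin_add]
  exact (Submodule.finrank_mono (LinearMap.range_add_le _ _)).trans
    (Submodule.finrank_add_le_finrank_add_finrank _ _)

theorem rank_of_sum_mul_le_card (J : Finset ι) (A : m → ι → F) (B : ι → l → F) :
    (of fun s t => ∑ j ∈ J, A s j * B j t).rank ≤ #J := by
  have hfactor : of (fun s t => ∑ j ∈ J, A s j * B j t) =
      (of fun s (j : J) => A s j) * (of fun (j : J) t => B j t) := by
    ext s t
    simp only [of_apply, mul_apply]
    exact (sum_attach J fun j => A s j * B j t).symm
  rw [hfactor]
  exact (rank_mul_le_left _ _).trans ((rank_le_card_width _).trans (Fintype.card_coe J).le)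

theorem rank_of_sum_mul_le_card_image [DecidableEq ι] (K : Finset κ) (f : κ → ι)
    (u : m → ι → F) (w : κ → l → F) :
    (of fun s t => ∑ k ∈ K, u s (f k) * w k t).rank ≤ #(K.image f) := by
  have hgroup : of (fun s t => ∑ k ∈ K, u s (f k) * w k t) =
      of fun s t => ∑ j ∈ K.image f, u s j * ∑ k ∈ K with f k = j, w k t := by
    ext s t
    simp only [of_apply, mul_sum]
    rw [← sum_fiberwise_of_maps_to fun k hk => mem_image_of_mem f hk]
    refine sum_congr rfl fun j _ => sum_congr rfl fun k hk => ?_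
    rw [(mem_filter.1 hk).2]
  rw [hgroup]
  exact rank_of_sum_mul_le_card _ _ _

theorem rank_of_sum_mul_le_card_image' [Fintype m] [DecidableEq ι] (K : Finset κ) (g : κ → ι)
    (w : κ → m → F) (v : ι → l → F) :
    (of fun s t => ∑ k ∈ K, w k s * v (g k) t).rank ≤ #(K.image g) := by
  rw [← rank_transpose]
  convert rank_of_sum_mul_le_card_image K g (fun t j => v j t) w using 2
  ext t s
  simp only [transpose_apply, of_apply, mul_comm]

theorem rank_of_sum_le_card_image_add_card_image [Fintype m] [DecidableEq ι] (K : Finset κ)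
    (p : κ → Prop) [DecidablePred p] (f g : κ → ι) (c : κ → F) (u : m → ι → F)
    (v : ι → l → F) :
    (of fun s t => ∑ k ∈ K, c k * (u s (f k) * v (g k) t)).rank ≤
      #((K.filter p).image f) + #((K.filter (¬ p ·)).image g) := by
  have hsplit : of (fun s t => ∑ k ∈ K, c k * (u s (f k) * v (g k) t)) =
      of (fun s t => ∑ k ∈ K with p k, u s (f k) * (c k * v (g k) t)) +
        of (fun s t => ∑ k ∈ K with ¬ p k, (c k * u s (f k)) * v (g k) t) := by
    ext s t
    rw [add_apply, of_apply, of_apply, of_apply, ← sum_filter_add_sum_filter_not K p]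
    congr 1 <;> exact sum_congr rfl fun _ _ => by ring
  rw [hsplit]
  exact (rank_add_le _ _).trans (add_le_add (rank_of_sum_mul_le_card_image _ _ _ _)
    (rank_of_sum_mul_le_card_image' _ _ _ _))

end Matrix

namespace MvPolynomial

variable {R σ : Type*} [CommSemiring R] [Fintype σ] [DecidableEq σ]

def binomialIndex (P : MvPolynomial σ R) : Finset ((_ : σ →₀ ℕ) × (σ → ℕ)) :=
  P.support.sigma fun a => Fintype.piFinset fun i => range (a i + 1)

theorem eval_add_eq_sum_binomialIndex (P : MvPolynomial σ R) (s t : σ → R) :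
    eval (s + t) P = ∑ k ∈ P.binomialIndex,
      (coeff k.1 P * ∏ i, ((k.1 i).choose (k.2 i) : R)) *
        ((∏ i, s i ^ k.2 i) * ∏ i, t i ^ (k.1 i - k.2 i)) := by
  rw [eval_eq', binomialIndex, sum_sigma]
  refine sum_congr rfl fun a _ => ?_
  simp_rw [Pi.add_apply, add_pow]
  rw [prod_univ_sum, mul_sum]
  refine sum_congr rfl fun b _ => ?_
  rw [prod_mul_distrib, prod_mul_distrib]
  ring

variable {P : MvPolynomial σ R} {k : (_ : σ →₀ ℕ) × (σ → ℕ)}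

theorem snd_le_fst_of_mem_binomialIndex (hk : k ∈ P.binomialIndex) (i : σ) : k.2 i ≤ k.1 i :=
  Nat.lt_succ_iff.mp (mem_range.mp (Fintype.mem_piFinset.mp (mem_sigma.mp hk).2 i))

theorem fst_le_degreeOf_of_mem_binomialIndex (hk : k ∈ P.binomialIndex) (i : σ) :
    k.1 i ≤ P.degreeOf i := by
  rw [degreeOf_eq_sup]
  exact le_sup (f := fun a => a i) (mem_sigma.mp hk).1

theorem sum_fst_le_totalDegree_of_mem_binomialIndex (hk : k ∈ P.binomialIndex) :
    ∑ i, k.1 i ≤ P.totalDegree := by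
  simpa [Finsupp.sum_fintype] using le_totalDegree (mem_sigma.mp hk).1

theorem sum_snd_add_sum_sub_of_mem_binomialIndex (hk : k ∈ P.binomialIndex) :
    ∑ i, k.2 i + ∑ i, (k.1 i - k.2 i) = ∑ i, k.1 i := by
  rw [← sum_add_distrib]
  exact sum_congr rfl fun i _ => Nat.add_sub_cancel' (snd_le_fst_of_mem_binomialIndex hk i)

end MvPolynomial

theorem card_le_mCount_s7 {q n : ℕ} {e : ℝ} {J : Finset (Fin n → ℕ)}
    (hJ : ∀ b ∈ J, (∀ i, b i ≤ q - 1) ∧ ((∑ i, b i : ℕ) : ℝ) ≤ e) :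
    #J ≤ mCount q n e := by
  have hfin : {a : Fin n → ℕ | (∀ i, a i ≤ q - 1) ∧ ((∑ i, a i : ℕ) : ℝ) ≤ e}.Finite :=
    (Set.finite_Iic fun _ => q - 1).subset fun a ha i => ha.1 i
  rw [mCount, ← Set.coe_ofPred, Nat.card_coe_set_eq, ← Set.ncard_coe_finset]
  exact Set.ncard_le_ncard hJ hfin

theorem croot_lev_pach_rank_general (q n : ℕ) (d : ℝ)
    (F : Type*) [Field F]
    (P : MvPolynomial (Fin n) F)
    (hdeg : ∀ i, P.degreeOf i ≤ q - 1) (htot : (P.totalDegree : ℝ) ≤ d)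
    (S T : Finset (Fin n → F)) :
    Matrix.rank (Matrix.of fun (s : S) (t : T) => MvPolynomial.eval ((s : Fin n → F) + (t : Fin n → F)) P) ≤
      2 * mCount q n (d / 2) := by
  classical
  have hdeg' {k} (hk : k ∈ P.binomialIndex) (i : Fin n) : k.1 i ≤ q - 1 :=
    (MvPolynomial.fst_le_degreeOf_of_mem_binomialIndex hk i).trans (hdeg i)
  have htot' {k} (hk : k ∈ P.binomialIndex) :
      ((∑ i, k.2 i : ℕ) : ℝ) + ((∑ i, (k.1 i - k.2 i) : ℕ) : ℝ) ≤ d := by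
    rw [← Nat.cast_add, MvPolynomial.sum_snd_add_sum_sub_of_mem_binomialIndex hk]
    exact (Nat.cast_le.2 (MvPolynomial.sum_fst_le_totalDegree_of_mem_binomialIndex hk)).trans htot
  simp_rw [MvPolynomial.eval_add_eq_sum_binomialIndex, two_mul]
  refine (Matrix.rank_of_sum_le_card_image_add_card_image P.binomialIndex
    (fun k => ((∑ i, k.2 i : ℕ) : ℝ) ≤ d / 2) (fun k => k.2) (fun k i => k.1 i - k.2 i)
    _ (fun (s : S) b => ∏ i, s.1 i ^ b i) (fun b (t : T) => ∏ i, t.1 i ^ b i)).trans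
    (add_le_add (card_le_mCount_s7 ?_) (card_le_mCount_s7 ?_))
  · simp only [forall_mem_image, mem_filter, and_imp]
    intro k hk hlow
    exact ⟨fun i => (MvPolynomial.snd_le_fst_of_mem_binomialIndex hk i).trans (hdeg' hk i), hlow⟩
  · simp only [forall_mem_image, mem_filter, and_imp]
    intro k hk hhigh
    exact ⟨fun i => (Nat.sub_le _ _).trans (hdeg' hk i), by linarith [htot' hk, not_le.1 hhigh]⟩

/-- **Croot–Lev–Pach rank lemma.** -/
theorem croot_lev_pach_rank (q n : ℕ) (hq : IsPrimePow q) (hn : 0 < n) (d : ℝ) (hd : 0 ≤ d)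
    (F : Type*) [Field F] [Fintype F] (hF : Fintype.card F = q)
    (P : MvPolynomial (Fin n) F)
    (hdeg : ∀ i, P.degreeOf i ≤ q - 1) (htot : (P.totalDegree : ℝ) ≤ d)
    (S T : Finset (Fin n → F)) :
    Matrix.rank (Matrix.of fun (s : S) (t : T) => MvPolynomial.eval ((s : Fin n → F) + (t : Fin n → F)) P) ≤
      2 * mCount q n (d / 2) :=
  croot_lev_pach_rank_general q n d F P hdeg htot S T
end
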